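/- For any d×d density matrix ρ, the modified trace distance measure of coherence is bounded above by the l₁-norm of coherence: inf_{λ ≥ 0, δ diagonal density matrix} ‖ρ − λδ‖_tr ≤ Σ_{i≠j} |ρ_{ij}|. -/

import Mathlib

open Matrix
open scoped ComplexOrder

/-- The positive semidefinite square root of a positive semidefinite matrix (as defined in
Mathlib of December 2024, since removed). -/
noncomputable def Matrix.PosSemidef.sqrt {n : Type*} [Fintype n] [DecidableEq n]
    {A : Matrix n n ℂ} (hA : A.PosSemidef) : Matrix n n ℂ :=
  hA.isHermitian.eigenvectorUnitary.1 *
    diagonal ((↑) ∘ (√·) ∘ hA.isHermitian.eigenvalues) *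
    (star hA.isHermitian.eigenvectorUnitary : Matrix n n ℂ)

/-- The trace norm of a matrix `A`: `‖A‖_tr = Tr √(AᴴA)`. -/
noncomputable def traceNorm {d : ℕ} (A : Matrix (Fin d) (Fin d) ℂ) : ℝ :=
  ((Matrix.posSemidef_conjTranspose_mul_self A).sqrt.trace).re

/-!
Take `λ = 1` and `δ` the diagonal part of `ρ`, so that `ρ - δ` is the off-diagonal part `A` of
`ρ`. As `A` is Hermitian, `‖A‖_tr = ∑ᵢ |λᵢ|`, and in an eigenbasis `U` each eigenvalue is the
diagonal entry `λᵢ = ∑ⱼₖ conj(Uⱼᵢ) Aⱼₖ Uₖᵢ`. Summing `|λᵢ|` over `i` and exchanging sums, it is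
enough that `∑ᵢ |Uⱼᵢ| |Uₖᵢ| ≤ 1`, which follows from AM-GM since the rows of `U` are unit vectors.
-/

namespace Matrix

variable {𝕜 : Type*} [RCLike 𝕜] {n : Type*} [Fintype n] [DecidableEq n]

lemma sum_norm_sq_row_eq_one_of_mem_unitaryGroup {U : Matrix n n 𝕜}
    (hU : U ∈ unitaryGroup n 𝕜) (j : n) : ∑ i, ‖U j i‖ ^ 2 = 1 := by
  have hjj : (U * star U) j j = 1 := by rw [Unitary.mul_star_self_of_mem hU, one_apply_eq]
  simp only [mul_apply, star_apply, ← starRingEnd_apply, RCLike.mul_conj] at hjj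
  exact_mod_cast hjj

lemma sum_norm_mul_norm_row_le_one_of_mem_unitaryGroup {U : Matrix n n 𝕜}
    (hU : U ∈ unitaryGroup n 𝕜) (j k : n) : ∑ i, ‖U j i‖ * ‖U k i‖ ≤ 1 := by
  have hamgm : ∀ i, ‖U j i‖ * ‖U k i‖ ≤ (‖U j i‖ ^ 2 + ‖U k i‖ ^ 2) / 2 := fun i => by
    linarith [two_mul_le_add_sq ‖U j i‖ ‖U k i‖]
  calc ∑ i, ‖U j i‖ * ‖U k i‖ ≤ ∑ i, (‖U j i‖ ^ 2 + ‖U k i‖ ^ 2) / 2 :=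
        Finset.sum_le_sum fun i _ => hamgm i
    _ = 1 := by
        rw [← Finset.sum_div, Finset.sum_add_distrib,
          sum_norm_sq_row_eq_one_of_mem_unitaryGroup hU j,
          sum_norm_sq_row_eq_one_of_mem_unitaryGroup hU k]
        norm_num

lemma sum_norm_diag_star_mul_mul_le {U : Matrix n n 𝕜}
    (hU : U ∈ unitaryGroup n 𝕜) (A : Matrix n n 𝕜) :
    ∑ i, ‖(star U * A * U) i i‖ ≤ ∑ j, ∑ k, ‖A j k‖ := by
  have hentry : ∀ i, ‖(star U * A * U) i i‖ ≤ ∑ j, ∑ k, ‖U j i‖ * ‖A j k‖ * ‖U k i‖ := by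
    intro i
    simp only [mul_apply, star_apply, Finset.sum_mul]
    rw [Finset.sum_comm]
    refine (norm_sum_le _ _).trans (Finset.sum_le_sum fun j _ => ?_)
    refine (norm_sum_le _ _).trans (Finset.sum_le_sum fun k _ => ?_)
    rw [norm_mul, norm_mul, norm_star]
  calc ∑ i, ‖(star U * A * U) i i‖
      ≤ ∑ i, ∑ j, ∑ k, ‖U j i‖ * ‖A j k‖ * ‖U k i‖ := Finset.sum_le_sum fun i _ => hentry i
    _ = ∑ j, ∑ k, ‖A j k‖ * ∑ i, ‖U j i‖ * ‖U k i‖ := by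
        simp only [Finset.mul_sum]
        rw [Finset.sum_comm]
        refine Finset.sum_congr rfl fun j _ => ?_
        rw [Finset.sum_comm]
        refine Finset.sum_congr rfl fun k _ => Finset.sum_congr rfl fun i _ => by ring
    _ ≤ ∑ j, ∑ k, ‖A j k‖ := by
        gcongr with j _ k _
        exact mul_le_of_le_one_right (norm_nonneg _)
          (sum_norm_mul_norm_row_le_one_of_mem_unitaryGroup hU j k)

lemma IsHermitian.sum_abs_eigenvalues_le_sum_norm {A : Matrix n n 𝕜}
    (hA : A.IsHermitian) : ∑ i, |hA.eigenvalues i| ≤ ∑ j, ∑ k, ‖A j k‖ := by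
  have hdiag := hA.conjStarAlgAut_star_eigenvectorUnitary
  rw [Unitary.conjStarAlgAut_star_apply] at hdiag
  convert sum_norm_diag_star_mul_mul_le hA.eigenvectorUnitary.2 A using 2 with i
  rw [hdiag, diagonal_apply_eq, Function.comp_apply, RCLike.norm_ofReal]

lemma IsHermitian.trace_cfc {A : Matrix n n 𝕜} (hA : A.IsHermitian)
    (f : ℝ → ℝ) : (cfc f A).trace = ∑ i, (f (hA.eigenvalues i) : 𝕜) := by
  rw [hA.cfc_eq, IsHermitian.cfc, Unitary.conjStarAlgAut_apply, trace_mul_cycle,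
    Unitary.coe_star_mul_self, one_mul, trace_diagonal]
  rfl

lemma PosSemidef.sqrt_eq_cfc {A : Matrix n n ℂ} (hA : A.PosSemidef) :
    hA.sqrt = cfc Real.sqrt A := by
  rw [hA.isHermitian.cfc_eq]
  rfl

end Matrix

lemma traceNorm_nonneg {d : ℕ} (A : Matrix (Fin d) (Fin d) ℂ) : 0 ≤ traceNorm A := by
  rw [traceNorm, PosSemidef.sqrt_eq_cfc,
    (posSemidef_conjTranspose_mul_self A).isHermitian.trace_cfc, Complex.re_sum]
  simp only [Complex.coe_algebraMap, Complex.ofReal_re]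
  positivity

lemma Matrix.IsHermitian.traceNorm_eq_sum_abs_eigenvalues {d : ℕ} {A : Matrix (Fin d) (Fin d) ℂ}
    (hA : A.IsHermitian) : traceNorm A = ∑ i, |hA.eigenvalues i| := by
  have habs : cfc Real.sqrt (Aᴴ * A) = cfc (fun x : ℝ => |x|) A := by
    simp_rw [hA.eq, ← pow_two, ← Real.sqrt_sq_eq_abs]
    exact (cfc_comp_pow Real.sqrt 2 A).symm
  rw [traceNorm, PosSemidef.sqrt_eq_cfc, habs, hA.trace_cfc, Complex.re_sum]
  simp only [Complex.coe_algebraMap, Complex.ofReal_re]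

lemma Matrix.IsHermitian.traceNorm_le_sum_norm {d : ℕ} {A : Matrix (Fin d) (Fin d) ℂ}
    (hA : A.IsHermitian) : traceNorm A ≤ ∑ j, ∑ k, ‖A j k‖ :=
  hA.traceNorm_eq_sum_abs_eigenvalues ▸ hA.sum_abs_eigenvalues_le_sum_norm

lemma sub_diagonal_diag_apply {n R : Type*} [DecidableEq n] [AddGroup R]
    (A : Matrix n n R) (i j : n) :
    (A - diagonal A.diag) i j = if i = j then 0 else A i j := by
  by_cases h : i = j
  · subst h; simp
  · simp [h]

/-- For any `d×d` density matrix `ρ`, the modified trace distance measure of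
coherence is bounded above by the `l₁`-norm of coherence. -/
theorem modified_trace_coherence_le_l1 {d : ℕ}
    (ρ : Matrix (Fin d) (Fin d) ℂ) (hρ : ρ.PosSemidef) (hρtr : ρ.trace = 1) :
    sInf {x : ℝ | ∃ (l : ℝ) (δ : Matrix (Fin d) (Fin d) ℂ),
        0 ≤ l ∧ δ.PosSemidef ∧ δ.trace = 1 ∧ δ.IsDiag ∧
        x = traceNorm (ρ - l • δ)}
      ≤ ∑ i, ∑ j, (if i = j then 0 else ‖ρ i j‖) := by
  set δ : Matrix (Fin d) (Fin d) ℂ := diagonal ρ.diag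
  have hδ : δ.PosSemidef := PosSemidef.diagonal fun i => hρ.diag_nonneg
  have hδtr : δ.trace = 1 := by rw [trace_diagonal, ← hρtr, trace]
  have hbdd : BddBelow {x : ℝ | ∃ (l : ℝ) (δ : Matrix (Fin d) (Fin d) ℂ),
      0 ≤ l ∧ δ.PosSemidef ∧ δ.trace = 1 ∧ δ.IsDiag ∧ x = traceNorm (ρ - l • δ)} := by
    refine ⟨0, ?_⟩
    rintro x ⟨l, δ, -, -, -, -, rfl⟩
    exact traceNorm_nonneg _
  calc _ ≤ traceNorm (ρ - δ) :=
        csInf_le hbdd ⟨1, δ, zero_le_one, hδ, hδtr, isDiag_diagonal _, by rw [one_smul]⟩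
    _ ≤ ∑ i, ∑ j, ‖(ρ - δ) i j‖ := (hρ.isHermitian.sub hδ.isHermitian).traceNorm_le_sum_norm
    _ = ∑ i, ∑ j, (if i = j then 0 else ‖ρ i j‖) := by
        simp only [δ, sub_diagonal_diag_apply, apply_ite, norm_zero]
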